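/- Let 0 < α < 1, 0 ≤ β ≤ 1, γ = α + β(1 − α), and let ψ ∈ C¹([a,b]) be increasing with ψ' ≠ 0. If f ∈ C_{1−γ;ψ}[a,b] is bounded by M in the weighted norm, then ‖I_{a+}^{α;ψ} f‖_{C_{1−γ;ψ}[a,x]} ≤ M · (Γ(γ)/Γ(γ+α)) · (ψ(x) − ψ(a))^α for x ∈ (a,b]. -/

import Mathlib

open MeasureTheory Real Set

noncomputable def psiInt (a α : ℝ) (ψ f : ℝ → ℝ) (x : ℝ) : ℝ :=
  (1 / Real.Gamma α) * ∫ t in a..x, deriv ψ t * (ψ x - ψ t) ^ (α - 1) * f t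

/-!
On `(a, t]` the weighted bound gives `|f s| ≤ M (ψ s - ψ a) ^ (γ - 1)`, so the integrand of
`I^{α;ψ} f (t)` is dominated by `M ψ'(s) (ψ s - ψ a) ^ (γ - 1) (ψ t - ψ s) ^ (α - 1)`.
The substitution `u = ψ s` (valid for monotone `ψ` although the majorant is singular at both
ends) turns the integral of the majorant into a shifted beta integral, equal to
`(ψ t - ψ a) ^ (γ + α - 1) Γ(γ) Γ(α) / Γ(γ + α)`. Multiplying by the weight
`(ψ t - ψ a) ^ (1 - γ) / Γ(α)` gives `M Γ(γ) / Γ(γ + α) (ψ t - ψ a) ^ α`, which increases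
with `t`.
-/

open ProbabilityTheory

section Beta

variable {p q : ℝ}

lemma ofReal_rpow_mul_one_sub_rpow {x : ℝ} (hx : x ∈ Icc (0 : ℝ) 1) :
    ((x ^ (p - 1) * (1 - x) ^ (q - 1) : ℝ) : ℂ)
      = (x : ℂ) ^ ((p : ℂ) - 1) * (1 - (x : ℂ)) ^ ((q : ℂ) - 1) := by
  rw [Complex.ofReal_mul, Complex.ofReal_cpow hx.1, Complex.ofReal_cpow (sub_nonneg.2 hx.2)]
  push_cast
  rfl

lemma intervalIntegrable_rpow_mul_one_sub_rpow (hp : 0 < p) (hq : 0 < q) :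
    IntervalIntegrable (fun x : ℝ ↦ x ^ (p - 1) * (1 - x) ^ (q - 1)) volume 0 1 := by
  have h := Complex.betaIntegral_convergent (u := p) (v := q) (by simpa) (by simpa)
  rw [intervalIntegrable_iff, uIoc_of_le zero_le_one] at h ⊢
  refine IntegrableOn.congr_fun h.re (fun x hx ↦ ?_) measurableSet_Ioc
  rw [RCLike.re_to_complex, ← ofReal_rpow_mul_one_sub_rpow (Ioc_subset_Icc_self hx),
    Complex.ofReal_re]

lemma integral_rpow_mul_one_sub_rpow (hp : 0 < p) (hq : 0 < q) :
    ∫ x in (0 : ℝ)..1, x ^ (p - 1) * (1 - x) ^ (q - 1) = beta p q := by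
  rw [beta_eq_betaIntegralReal p q hp hq, Complex.betaIntegral,
    ← intervalIntegral.integral_congr (fun x hx ↦ ofReal_rpow_mul_one_sub_rpow
      (by rwa [uIcc_of_le zero_le_one] at hx)),
    intervalIntegral.integral_ofReal, Complex.ofReal_re]

variable {A B : ℝ}

lemma sub_rpow_mul_sub_rpow_eq (hAB : A < B) {u : ℝ} (hu : u ∈ Icc A B) :
    (u - A) ^ (p - 1) * (B - u) ^ (q - 1)
      = (B - A) ^ (p + q - 2)
          * (((u - A) / (B - A)) ^ (p - 1) * (1 - (u - A) / (B - A)) ^ (q - 1)) := by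
  have hc : 0 < B - A := sub_pos.2 hAB
  rw [show 1 - (u - A) / (B - A) = (B - u) / (B - A) by field_simp; ring,
    div_rpow (sub_nonneg.2 hu.1) hc.le, div_rpow (sub_nonneg.2 hu.2) hc.le,
    show p + q - 2 = (p - 1) + (q - 1) by ring, rpow_add hc]
  field_simp

lemma intervalIntegrable_sub_rpow_mul_sub_rpow (hp : 0 < p) (hq : 0 < q) (hAB : A < B) :
    IntervalIntegrable (fun u ↦ (u - A) ^ (p - 1) * (B - u) ^ (q - 1)) volume A B := by
  have h := (((intervalIntegrable_rpow_mul_one_sub_rpow hp hq).comp_mul_left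
    (c := (B - A)⁻¹)).comp_sub_right A).const_mul ((B - A) ^ (p + q - 2))
  rw [zero_div, one_div, inv_inv, zero_add, sub_add_cancel] at h
  refine h.congr fun u hu ↦ ?_
  rw [uIoc_of_le hAB.le] at hu
  simp only [sub_rpow_mul_sub_rpow_eq hAB (Ioc_subset_Icc_self hu), inv_mul_eq_div]

lemma integral_sub_rpow_mul_sub_rpow (hp : 0 < p) (hq : 0 < q) (hAB : A < B) :
    ∫ u in A..B, (u - A) ^ (p - 1) * (B - u) ^ (q - 1) = (B - A) ^ (p + q - 1) * beta p q := by
  have hc : 0 < B - A := sub_pos.2 hAB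
  rw [intervalIntegral.integral_congr fun u hu ↦
      sub_rpow_mul_sub_rpow_eq hAB (by rwa [uIcc_of_le hAB.le] at hu),
    intervalIntegral.integral_const_mul]
  simp_rw [sub_div]
  rw [intervalIntegral.integral_comp_div_sub (fun x ↦ x ^ (p - 1) * (1 - x) ^ (q - 1)) hc.ne',
    sub_self, ← sub_div, div_self hc.ne', integral_rpow_mul_one_sub_rpow hp hq, smul_eq_mul,
    ← mul_assoc, ← rpow_add_one hc.ne']
  ring_nf

end Beta

section ChangeOfVariables

variable {φ g : ℝ → ℝ} {a b : ℝ}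

lemma MonotoneOn.deriv_nonneg_of_mem_Ioo (hmono : MonotoneOn φ (Icc a b)) {x : ℝ}
    (hx : x ∈ Ioo a b) : 0 ≤ deriv φ x := by
  rw [← derivWithin_of_mem_nhds (Icc_mem_nhds hx.1 hx.2)]
  exact hmono.derivWithin_nonneg

lemma MonotoneOn.intervalIntegrable_deriv_mul_comp (hab : a ≤ b) (hφ : ContinuousOn φ (Icc a b))
    (hφd : DifferentiableOn ℝ φ (Ioo a b)) (hmono : MonotoneOn φ (Icc a b))
    (hg : IntervalIntegrable g volume (φ a) (φ b)) :
    IntervalIntegrable (fun x ↦ deriv φ x * g (φ x)) volume a b := by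
  rw [intervalIntegrable_iff_integrableOn_Icc_of_le hab]
  exact (integrableOn_Icc_deriv_smul_iff_of_deriv_nonneg (g := g) hφ
    (fun x hx ↦ (hφd.differentiableAt (isOpen_Ioo.mem_nhds hx)).hasDerivAt)
    (fun x hx ↦ hmono.deriv_nonneg_of_mem_Ioo hx) hab).2
    (((intervalIntegrable_iff' (f := g)).1 hg).mono_set Icc_subset_uIcc)

lemma MonotoneOn.integral_deriv_mul_comp (hab : a ≤ b) (hφ : ContinuousOn φ (Icc a b))
    (hφd : DifferentiableOn ℝ φ (Ioo a b)) (hmono : MonotoneOn φ (Icc a b)) :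
    ∫ x in a..b, deriv φ x * g (φ x) = ∫ u in φ a..φ b, g u := by
  rw [intervalIntegral.integral_of_le hab, ← integral_Icc_eq_integral_Ioc,
    intervalIntegral.integral_of_le (hmono ⟨le_rfl, hab⟩ ⟨hab, le_rfl⟩ hab),
    ← integral_Icc_eq_integral_Ioc]
  exact integral_Icc_deriv_smul_of_deriv_nonneg hφ
    (fun x hx ↦ (hφd.differentiableAt (isOpen_Ioo.mem_nhds hx)).hasDerivAt)
    (fun x hx ↦ hmono.deriv_nonneg_of_mem_Ioo hx) hab

end ChangeOfVariables

lemma abs_le_mul_rpow_of_abs_rpow_mul_le {w y γ M : ℝ} (hw : 0 < w)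
    (h : |w ^ (1 - γ) * y| ≤ M) : |y| ≤ M * w ^ (γ - 1) := by
  rw [abs_mul, abs_of_pos (rpow_pos_of_pos hw _)] at h
  calc |y| = w ^ (γ - 1) * (w ^ (1 - γ) * |y|) := by
        rw [← mul_assoc, ← rpow_add hw, show γ - 1 + (1 - γ) = 0 by ring, rpow_zero, one_mul]
    _ ≤ w ^ (γ - 1) * M := by gcongr
    _ = M * w ^ (γ - 1) := mul_comm _ _

section PsiIntegral

variable {a t α γ M : ℝ} {ψ f : ℝ → ℝ}

lemma abs_integral_deriv_mul_rpow_mul_le (hat : a < t) (hψ : ContinuousOn ψ (Icc a t))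
    (hψd : DifferentiableOn ℝ ψ (Ioo a t)) (hmono : StrictMonoOn ψ (Icc a t))
    (hα : 0 < α) (hγ : 0 < γ) (hM : ∀ s ∈ Icc a t, |(ψ s - ψ a) ^ (1 - γ) * f s| ≤ M) :
    |∫ s in a..t, deriv ψ s * (ψ t - ψ s) ^ (α - 1) * f s|
      ≤ M * ((ψ t - ψ a) ^ (γ + α - 1) * beta γ α) := by
  have hψat : ψ a < ψ t := hmono (left_mem_Icc.2 hat.le) (right_mem_Icc.2 hat.le) hat
  set g : ℝ → ℝ := fun u ↦ (u - ψ a) ^ (γ - 1) * (ψ t - u) ^ (α - 1) with hg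
  have hk_int : IntervalIntegrable (fun s ↦ deriv ψ s * g (ψ s)) volume a t :=
    hmono.monotoneOn.intervalIntegrable_deriv_mul_comp hat.le hψ hψd
      (intervalIntegrable_sub_rpow_mul_sub_rpow hγ hα hψat)
  have hk : ∫ s in a..t, deriv ψ s * g (ψ s) = (ψ t - ψ a) ^ (γ + α - 1) * beta γ α := by
    rw [hmono.monotoneOn.integral_deriv_mul_comp hat.le hψ hψd,
      integral_sub_rpow_mul_sub_rpow hγ hα hψat]
  have hpointwise : ∀ s ∈ Ioo a t,
      ‖deriv ψ s * (ψ t - ψ s) ^ (α - 1) * f s‖ ≤ M * (deriv ψ s * g (ψ s)) := by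
    intro s hs
    have hψas : ψ a < ψ s := hmono (left_mem_Icc.2 hat.le) (Ioo_subset_Icc_self hs) hs.1
    have hψst : ψ s < ψ t := hmono (Ioo_subset_Icc_self hs) (right_mem_Icc.2 hat.le) hs.2
    have hf : |f s| ≤ M * (ψ s - ψ a) ^ (γ - 1) :=
      abs_le_mul_rpow_of_abs_rpow_mul_le (sub_pos.2 hψas) (hM s (Ioo_subset_Icc_self hs))
    have hd : 0 ≤ deriv ψ s := hmono.monotoneOn.deriv_nonneg_of_mem_Ioo hs
    have hr : 0 ≤ (ψ t - ψ s) ^ (α - 1) := rpow_nonneg (sub_nonneg.2 hψst.le) _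
    calc ‖deriv ψ s * (ψ t - ψ s) ^ (α - 1) * f s‖
        = deriv ψ s * (ψ t - ψ s) ^ (α - 1) * |f s| := by
          rw [Real.norm_eq_abs, abs_mul, abs_mul, abs_of_nonneg hd, abs_of_nonneg hr]
      _ ≤ deriv ψ s * (ψ t - ψ s) ^ (α - 1) * (M * (ψ s - ψ a) ^ (γ - 1)) := by gcongr
      _ = M * (deriv ψ s * g (ψ s)) := by rw [hg]; ring
  have hae : ∀ᵐ s ∂volume, s ∈ Ioc a t →
      ‖deriv ψ s * (ψ t - ψ s) ^ (α - 1) * f s‖ ≤ M * (deriv ψ s * g (ψ s)) := by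
    -- `ψ'` may be negative at the endpoint `t`, which is a null set
    filter_upwards [Measure.ae_ne volume t] with s hst hs
    exact hpointwise s ⟨hs.1, hs.2.lt_of_ne hst⟩
  calc |∫ s in a..t, deriv ψ s * (ψ t - ψ s) ^ (α - 1) * f s|
      ≤ ∫ s in a..t, M * (deriv ψ s * g (ψ s)) :=
        intervalIntegral.norm_integral_le_of_norm_le hat.le hae (hk_int.const_mul M)
    _ = M * ((ψ t - ψ a) ^ (γ + α - 1) * beta γ α) := by
        rw [intervalIntegral.integral_const_mul, hk]

lemma abs_rpow_mul_psiInt_le (hat : a ≤ t) (hψ : ContinuousOn ψ (Icc a t))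
    (hψd : DifferentiableOn ℝ ψ (Ioo a t)) (hmono : StrictMonoOn ψ (Icc a t))
    (hα : 0 < α) (hγ : 0 < γ) (hM : ∀ s ∈ Icc a t, |(ψ s - ψ a) ^ (1 - γ) * f s| ≤ M) :
    |(ψ t - ψ a) ^ (1 - γ) * psiInt a α ψ f t|
      ≤ M * (Gamma γ / Gamma (γ + α)) * (ψ t - ψ a) ^ α := by
  rcases hat.eq_or_lt with rfl | hat
  · simp [psiInt, zero_rpow hα.ne']
  have hc : 0 < ψ t - ψ a :=
    sub_pos.2 (hmono (left_mem_Icc.2 hat.le) (right_mem_Icc.2 hat.le) hat)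
  have hΓα : 0 < Gamma α := Gamma_pos_of_pos hα
  calc |(ψ t - ψ a) ^ (1 - γ) * psiInt a α ψ f t|
      = (ψ t - ψ a) ^ (1 - γ) * (1 / Gamma α)
          * |∫ s in a..t, deriv ψ s * (ψ t - ψ s) ^ (α - 1) * f s| := by
        rw [psiInt, abs_mul, abs_mul, abs_of_pos (rpow_pos_of_pos hc _),
          abs_of_pos (one_div_pos.2 hΓα), mul_assoc]
    _ ≤ (ψ t - ψ a) ^ (1 - γ) * (1 / Gamma α)
          * (M * ((ψ t - ψ a) ^ (γ + α - 1) * beta γ α)) := by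
        gcongr
        exact abs_integral_deriv_mul_rpow_mul_le hat hψ hψd hmono hα hγ hM
    _ = M * (Gamma γ / Gamma (γ + α)) * (ψ t - ψ a) ^ α := by
        have hsplit :
            (ψ t - ψ a) ^ α = (ψ t - ψ a) ^ (1 - γ) * (ψ t - ψ a) ^ (γ + α - 1) := by
          rw [← rpow_add hc]; ring_nf
        rw [beta, hsplit]
        field_simp

end PsiIntegral

theorem stmt10_general (a b α β γ M : ℝ) (ψ f : ℝ → ℝ)
    (hα : 0 < α) (hα1 : α < 1) (hβ0 : 0 ≤ β)
    (hγ : γ = α + β * (1 - α))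
    (hψ : ContDiffOn ℝ 1 ψ (Set.Icc a b)) (hmono : StrictMonoOn ψ (Set.Icc a b))
    (hM : ∀ t ∈ Set.Icc a b, |(ψ t - ψ a) ^ (1 - γ) * f t| ≤ M) :
    ∀ x ∈ Set.Ioc a b, ∀ t ∈ Set.Icc a x,
      |(ψ t - ψ a) ^ (1 - γ) * psiInt a α ψ f t| ≤
        M * (Real.Gamma γ / Real.Gamma (γ + α)) * (ψ x - ψ a) ^ α := by
  intro x hx t ht
  have hγ0 : 0 < γ :=
    hγ ▸ add_pos_of_pos_of_nonneg hα (mul_nonneg hβ0 (sub_nonneg.2 hα1.le))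
  have hsub : Icc a t ⊆ Icc a b := Icc_subset_Icc_right (ht.2.trans hx.2)
  have hM0 : 0 ≤ M := (abs_nonneg _).trans (hM a (left_mem_Icc.2 (hx.1.trans_le hx.2).le))
  calc |(ψ t - ψ a) ^ (1 - γ) * psiInt a α ψ f t|
      ≤ M * (Gamma γ / Gamma (γ + α)) * (ψ t - ψ a) ^ α :=
        abs_rpow_mul_psiInt_le ht.1 (hψ.continuousOn.mono hsub)
          ((hψ.differentiableOn one_ne_zero).mono (Ioo_subset_Icc_self.trans hsub))
          (hmono.mono hsub) hα hγ0 fun s hs ↦ hM s (hsub hs)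
    _ ≤ M * (Gamma γ / Gamma (γ + α)) * (ψ x - ψ a) ^ α := by
        have hψat : ψ a ≤ ψ t := hmono.monotoneOn (hsub (left_mem_Icc.2 ht.1))
          (hsub (right_mem_Icc.2 ht.1)) ht.1
        have hψtx : ψ t ≤ ψ x :=
          hmono.monotoneOn (hsub (right_mem_Icc.2 ht.1)) ⟨hx.1.le, hx.2⟩ ht.2
        gcongr

theorem stmt10 (a b α β γ M : ℝ) (ψ f : ℝ → ℝ) (hab : a < b)
    (hα : 0 < α) (hα1 : α < 1) (hβ0 : 0 ≤ β) (hβ1 : β ≤ 1)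
    (hγ : γ = α + β * (1 - α))
    (hψ : ContDiffOn ℝ 1 ψ (Set.Icc a b)) (hmono : StrictMonoOn ψ (Set.Icc a b))
    (hψ' : ∀ x ∈ Set.Icc a b, deriv ψ x ≠ 0)
    (hf : ContinuousOn (fun t => (ψ t - ψ a) ^ (1 - γ) * f t) (Set.Icc a b))
    (hM : ∀ t ∈ Set.Icc a b, |(ψ t - ψ a) ^ (1 - γ) * f t| ≤ M) :
    ∀ x ∈ Set.Ioc a b, ∀ t ∈ Set.Icc a x,
      |(ψ t - ψ a) ^ (1 - γ) * psiInt a α ψ f t| ≤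
        M * (Real.Gamma γ / Real.Gamma (γ + α)) * (ψ x - ψ a) ^ α :=
  stmt10_general a b α β γ M ψ f hα hα1 hβ0 hγ hψ hmono hM
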